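/- arXiv:2605.07152 — 2 statements merged into one kernel-verified Lean document; each statement's English description precedes it below -/
import Mathlib

section
/- Suppose A J_n + J_n A^T + B J_m B^T = 0, V^T J_n V = J_r, and U = J_r^{-1} V^T J_n. Then the reduced matrices A_r = U A V and B_r = U B satisfy A_r J_r + J_r A_r^T + B_r J_m B_r^T = 0. -/
open Matrix Kronecker

/-- Canonical symplectic matrix `J_k = I_k ⊗ [[0,1],[-1,0]]`. -/
def J (k : ℕ) : Matrix (Fin k × Fin 2) (Fin k × Fin 2) ℝ :=
  (1 : Matrix (Fin k) (Fin k) ℝ) ⊗ₖ !![0, 1; -1, 0]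

lemma sympJ_mul (k : ℕ) : J k * J k = -1 := by
  unfold _root_.J
  rw [← Matrix.mul_kronecker_mul]
  have h2 : (!![0, 1; -1, 0] * !![0, 1; -1, 0] : Matrix (Fin 2) (Fin 2) ℝ) = -1 := by
    ext i j; fin_cases i <;> fin_cases j <;>
      simp [Matrix.mul_apply, Fin.sum_univ_two, Matrix.one_apply]
  rw [h2, Matrix.one_mul]
  ext ⟨i, a⟩ ⟨j, b⟩
  simp [Matrix.kroneckerMap_apply, Matrix.one_apply, Prod.ext_iff]
  by_cases h : i = j <;> simp [h]

lemma sympJ_transpose (k : ℕ) : (J k)ᵀ = -J k := by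
  unfold _root_.J
  ext ⟨i, a⟩ ⟨j, b⟩
  simp only [Matrix.transpose_apply, Matrix.kroneckerMap_apply, Matrix.neg_apply,
    Matrix.one_apply]
  fin_cases a <;> fin_cases b <;> by_cases h : i = j <;> simp [h, eq_comm]

lemma sympJ_inv (k : ℕ) : (J k)⁻¹ = -J k := by
  apply Matrix.inv_eq_right_inv
  rw [Matrix.mul_neg, sympJ_mul]; simp

theorem stmt2 (n m r : ℕ)
    (A : Matrix (Fin n × Fin 2) (Fin n × Fin 2) ℝ)
    (B : Matrix (Fin n × Fin 2) (Fin m × Fin 2) ℝ)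
    (V : Matrix (Fin n × Fin 2) (Fin r × Fin 2) ℝ)
    (hA : A * J n + J n * Aᵀ + B * J m * Bᵀ = 0)
    (hV : Vᵀ * J n * V = J r)
    (U : Matrix (Fin r × Fin 2) (Fin n × Fin 2) ℝ)
    (hU : U = (J r)⁻¹ * Vᵀ * J n) :
    (U * A * V) * J r + J r * (U * A * V)ᵀ + (U * B) * J m * (U * B)ᵀ = 0 := by
  have hU' : U = -(J r) * Vᵀ * J n := by rw [hU, sympJ_inv]
  have hUt : Uᵀ = -(J n) * V * J r := by
    rw [hU']
    simp only [Matrix.transpose_mul, Matrix.transpose_neg, sympJ_transpose,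
      Matrix.transpose_transpose, Matrix.neg_mul, Matrix.mul_neg, neg_neg, Matrix.mul_assoc]
  have h1 : U * A * V * J r = U * (A * J n) * Uᵀ := by
    rw [hUt]
    have : J n * (-(J n) * V * J r) = V * J r := by
      rw [show -(J n) * V * J r = -(J n) * (V * J r) from Matrix.mul_assoc _ _ _,
        ← Matrix.mul_assoc (J n), Matrix.mul_neg, sympJ_mul]
      simp
    calc U * A * V * J r = U * A * (V * J r) := by rw [Matrix.mul_assoc]
      _ = U * A * (J n * (-(J n) * V * J r)) := by rw [this]
      _ = U * (A * J n) * (-(J n) * V * J r) := by simp only [Matrix.mul_assoc]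
  have h2 : J r * (U * A * V)ᵀ = U * (J n * Aᵀ) * Uᵀ := by
    have hUJ : U * J n = J r * Vᵀ := by
      rw [hU', Matrix.mul_assoc, Matrix.mul_assoc, sympJ_mul]
      simp [Matrix.mul_assoc]
    calc J r * (U * A * V)ᵀ = J r * (Vᵀ * Aᵀ * Uᵀ) := by
          simp [Matrix.transpose_mul, Matrix.mul_assoc]
      _ = (J r * Vᵀ) * Aᵀ * Uᵀ := by simp only [Matrix.mul_assoc]
      _ = (U * J n) * Aᵀ * Uᵀ := by rw [hUJ]
      _ = U * (J n * Aᵀ) * Uᵀ := by simp only [Matrix.mul_assoc]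
  have h3 : (U * B) * J m * (U * B)ᵀ = U * (B * J m * Bᵀ) * Uᵀ := by
    simp [Matrix.transpose_mul, Matrix.mul_assoc]
  rw [h1, h2, h3]
  have : U * (A * J n) * Uᵀ + U * (J n * Aᵀ) * Uᵀ + U * (B * J m * Bᵀ) * Uᵀ
      = U * (A * J n + J n * Aᵀ + B * J m * Bᵀ) * Uᵀ := by
    simp only [Matrix.mul_add, Matrix.add_mul]
  rw [this, hA]
  simp
end

section
/- If (A,B,C,D) satisfies the three physical realizability identities A J_n + J_n A^T + B J_m B^T = 0, J_n C^T + B J_m D^T = 0, D J_m D^T = J_m, and V ∈ ℝ^{2n×2r} satisfies V^T J_n V = J_r with U = J_r^{-1} V^T J_n, then the reduced-order quadruple (A_r, B_r, C_r, D_r) = (U A V, U B, C V, D) satisfies A_r J_r + J_r A_r^T + B_r J_m B_r^T = 0, J_r C_r^T + B_r J_m D_r^T = 0, and D_r J_m D_r^T = J_m. -/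
open Matrix Kronecker

lemma J_mul_J (k : ℕ) : _root_.J k * _root_.J k = -1 := by
  rw [show (_root_.J k) = (1 : Matrix (Fin k) (Fin k) ℝ) ⊗ₖ !![0, 1; -1, 0] from rfl,
    ← Matrix.mul_kronecker_mul]
  have h2 : (!![0, 1; -1, 0] : Matrix (Fin 2) (Fin 2) ℝ) * !![0, 1; -1, 0] = -1 := by
    ext i j; fin_cases i <;> fin_cases j <;>
      simp [Matrix.mul_apply, Fin.sum_univ_two, Matrix.one_apply]
  rw [Matrix.one_mul, h2]
  ext ⟨i,a⟩ ⟨j,b⟩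
  simp [Matrix.kroneckerMap_apply, Matrix.one_apply]
  split <;> simp_all

lemma Jk_transpose (k : ℕ) : (_root_.J k)ᵀ = -(_root_.J k) := by
  rw [show (_root_.J k) = (1 : Matrix (Fin k) (Fin k) ℝ) ⊗ₖ !![0, 1; -1, 0] from rfl]
  ext ⟨i,a⟩ ⟨j,b⟩
  simp [Matrix.kroneckerMap_apply, Matrix.one_apply, Matrix.transpose_apply]
  fin_cases a <;> fin_cases b <;> by_cases h : i = j <;> simp [h, eq_comm]

@[simp] lemma J_mul_J_mul (k : ℕ) {p : Type*} (X : Matrix (Fin k × Fin 2) p ℝ) :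
    _root_.J k * (_root_.J k * X) = -X := by
  rw [← Matrix.mul_assoc, J_mul_J, Matrix.neg_mul, Matrix.one_mul]

lemma Jk_inv (k : ℕ) : (_root_.J k)⁻¹ = -(_root_.J k) := by
  apply Matrix.inv_eq_right_inv
  rw [Matrix.mul_neg, J_mul_J, neg_neg]

theorem stmt4 (n m r : ℕ)
    (A : Matrix (Fin n × Fin 2) (Fin n × Fin 2) ℝ)
    (B : Matrix (Fin n × Fin 2) (Fin m × Fin 2) ℝ)
    (C : Matrix (Fin m × Fin 2) (Fin n × Fin 2) ℝ)
    (D : Matrix (Fin m × Fin 2) (Fin m × Fin 2) ℝ)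
    (V : Matrix (Fin n × Fin 2) (Fin r × Fin 2) ℝ)
    (hPR1 : A * J n + J n * Aᵀ + B * J m * Bᵀ = 0)
    (hPR2 : J n * Cᵀ + B * J m * Dᵀ = 0)
    (hPR3 : D * J m * Dᵀ = J m)
    (hV : Vᵀ * J n * V = J r)
    (U : Matrix (Fin r × Fin 2) (Fin n × Fin 2) ℝ)
    (hU : U = (J r)⁻¹ * Vᵀ * J n) :
    (U * A * V) * J r + J r * (U * A * V)ᵀ + (U * B) * J m * (U * B)ᵀ = 0 ∧
    J r * (C * V)ᵀ + (U * B) * J m * Dᵀ = 0 ∧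
    D * J m * Dᵀ = J m := by
  subst hU
  rw [Jk_inv]
  have hB : B * J m * Bᵀ = -(A * J n + J n * Aᵀ) := (neg_eq_of_add_eq_zero_right hPR1).symm
  have hD : B * J m * Dᵀ = -(J n * Cᵀ) := eq_neg_of_add_eq_zero_right hPR2
  refine ⟨?_, ?_, hPR3⟩
  · have h1 : ∀ X : Matrix (Fin n × Fin 2) (Fin r × Fin 2) ℝ,
        J n * (B * (J m * (Bᵀ * (J n * X)))) = J n * (A * X) + Aᵀ * (J n * X) := by
      intro X
      have e : J n * (B * (J m * (Bᵀ * (J n * X)))) = J n * (B * J m * Bᵀ) * (J n * X) := by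
        simp only [Matrix.mul_assoc]
      rw [e, hB]
      simp [Matrix.mul_neg, Matrix.neg_mul, Matrix.mul_add, Matrix.add_mul, Matrix.mul_assoc, add_comm]
    simp only [Matrix.transpose_mul, Matrix.transpose_neg, Matrix.transpose_transpose,
      Jk_transpose, Matrix.mul_neg, Matrix.neg_mul, neg_neg, Matrix.mul_assoc]
    rw [h1 (V * J r)]
    simp [Matrix.mul_add, Matrix.add_mul]
    abel
  · have e : B * (J m * Dᵀ) = -(J n * Cᵀ) := by rw [← Matrix.mul_assoc]; exact hD
    simp only [Matrix.transpose_mul, Matrix.mul_assoc, Matrix.neg_mul, e, Matrix.mul_neg,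
      J_mul_J_mul, neg_neg]
    abel
end
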